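/- Let X and Y be real Banach spaces, D_F ⊆ X open, F : X → Y continuously Fréchet differentiable on D_F, and x₀ ∈ D_F with F'(x₀) boundedly invertible. Suppose there exist constants l₀ > 0, η > 0, R > 0 with B̄(x₀, R) ⊆ D_F such that ‖(F'(x₀))⁻¹ ∘ (F'(x) − F'(x₀))‖ ≤ l₀‖x − x₀‖ for all x ∈ B̄(x₀, R), ‖(F'(x₀))⁻¹ F(x₀)‖ ≤ η, l₀η ≤ 3 − 2√2, and v₁* ≤ R where v₁* = ((1 + l₀η) − √((l₀η)² − 6l₀η + 1))/(4l₀). Then the Newton sequence x_{k+1} = x_k − (F'(x_k))⁻¹F(x_k) is well defined, remains in B̄(x₀, v₁*), and converges to a solution x* of F(x) = 0 with ‖x* − x_k‖ ≤ v₁* − v_k for all k, where v₀ = 0 and v_{k+1} = η + l₀v_k²/(1 − l₀v_k). -/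

import Mathlib

open Metric Filter

/-- One step of the Newton iteration, using `Ring.inverse` to make it a total function. -/
noncomputable def newtonStep {X Y : Type*} [NormedAddCommGroup X] [NormedSpace ℝ X]
    [NormedAddCommGroup Y] [NormedSpace ℝ Y]
    (F : X → Y) (F' : X → X →L[ℝ] Y) (B : Y →L[ℝ] X) (u : X) : X :=
  u - (Ring.inverse (B.comp (F' u))) (B (F u))

set_option maxHeartbeats 4000000 in
/-- Semilocal convergence of the Newton method in the center-Lipschitz case: if
`‖(F'(x₀))⁻¹(F'(x) − F'(x₀))‖ ≤ l₀‖x − x₀‖` on `B̄(x₀, R)`, `‖(F'(x₀))⁻¹F(x₀)‖ ≤ η`,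
`l₀η ≤ 3 − 2√2` and `v₁* ≤ R` with `v₁* = ((1 + l₀η) − √((l₀η)² − 6l₀η + 1))/(4l₀)`, then
the Newton sequence is well defined, remains in `B̄(x₀, v₁*)`, and converges to a solution
`x*` of `F(x) = 0` with `‖x* − x_k‖ ≤ v₁* − v_k`, where `v₀ = 0` and
`v_{k+1} = η + l₀v_k²/(1 − l₀v_k)`. -/
theorem newton_convergence_center_lipschitz
    {X Y : Type*} [NormedAddCommGroup X] [NormedSpace ℝ X] [CompleteSpace X]
    [NormedAddCommGroup Y] [NormedSpace ℝ Y] [CompleteSpace Y]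
    (DF : Set X) (hDF : IsOpen DF)
    (F : X → Y) (F' : X → X →L[ℝ] Y)
    (hFderiv : ∀ x ∈ DF, HasFDerivAt F (F' x) x)
    (hFcont : ContinuousOn F' DF)
    (x₀ : X) (hx₀ : x₀ ∈ DF)
    (B : Y →L[ℝ] X)
    (hB₁ : ∀ y, (F' x₀) (B y) = y) (hB₂ : ∀ z, B ((F' x₀) z) = z)
    (l₀ η R : ℝ) (hl₀ : 0 < l₀) (hη : 0 < η) (hR : 0 < R)
    (hball : closedBall x₀ R ⊆ DF)
    (hbound : ∀ x ∈ closedBall x₀ R, ‖B.comp (F' x - F' x₀)‖ ≤ l₀ * ‖x - x₀‖)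
    (hη0 : ‖B (F x₀)‖ ≤ η)
    (hcond : l₀ * η ≤ 3 - 2 * Real.sqrt 2)
    (vstar : ℝ)
    (hvstar : vstar =
      ((1 + l₀ * η) - Real.sqrt ((l₀ * η) ^ 2 - 6 * (l₀ * η) + 1)) / (4 * l₀))
    (hvstarR : vstar ≤ R)
    (v : ℕ → ℝ) (hv0 : v 0 = 0)
    (hvrec : ∀ k, v (k + 1) = η + l₀ * (v k) ^ 2 / (1 - l₀ * v k)) :
    ∃ x : ℕ → X, x 0 = x₀ ∧
      (∀ k, ∃ A : Y →L[ℝ] X, (∀ y, (F' (x k)) (A y) = y) ∧ (∀ z, A ((F' (x k)) z) = z) ∧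
        x (k + 1) = x k - A (F (x k))) ∧
      (∀ k, x k ∈ closedBall x₀ vstar) ∧
      ∃ xstar : X, Tendsto x atTop (nhds xstar) ∧ F xstar = 0 ∧
        ∀ k, ‖xstar - x k‖ ≤ vstar - v k := by
  classical
  -- ### Real-number preliminaries
  have hsqrt2 : Real.sqrt 2 ^ 2 = 2 := Real.sq_sqrt (by norm_num)
  have hsqrt2' : (1 : ℝ) ≤ Real.sqrt 2 := by nlinarith [Real.sqrt_nonneg 2]
  have ha : 0 < l₀ * η := mul_pos hl₀ hη
  have hdisc : 0 ≤ (l₀ * η) ^ 2 - 6 * (l₀ * η) + 1 := by nlinarith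
  set s : ℝ := Real.sqrt ((l₀ * η) ^ 2 - 6 * (l₀ * η) + 1) with hsdef
  have hs2 : s ^ 2 = (l₀ * η) ^ 2 - 6 * (l₀ * η) + 1 := Real.sq_sqrt hdisc
  have hs0 : 0 ≤ s := Real.sqrt_nonneg _
  have h4lv : 4 * l₀ * vstar = 1 + l₀ * η - s := by
    rw [hvstar]; field_simp
  have hslt : s < 1 + l₀ * η := by nlinarith
  have hvpos : 0 < vstar := by nlinarith
  have hquad : 2 * l₀ * vstar ^ 2 - (1 + l₀ * η) * vstar + η = 0 := by nlinarith
  have hlv : l₀ * vstar < 1 / 2 := by nlinarith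
  have hden0 : (0 : ℝ) < 1 - l₀ * vstar := by linarith
  have hfix : η + l₀ * vstar ^ 2 / (1 - l₀ * vstar) = vstar := by
    have h1 : l₀ * vstar ^ 2 / (1 - l₀ * vstar) = vstar - η := by
      rw [div_eq_iff hden0.ne']; nlinarith
    rw [h1]; ring
  have hηv : η ≤ vstar := by
    have h1 : 0 ≤ l₀ * vstar ^ 2 / (1 - l₀ * vstar) := by positivity
    linarith [hfix]
  -- monotonicity of the majorizing function
  have hψmono : ∀ p q : ℝ, 0 ≤ p → p ≤ q → q ≤ vstar →
      η + l₀ * p ^ 2 / (1 - l₀ * p) ≤ η + l₀ * q ^ 2 / (1 - l₀ * q) := by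
    intro p q hp hpq hq
    have hq0 : 0 ≤ q := hp.trans hpq
    have hdp : (0 : ℝ) < 1 - l₀ * p := by nlinarith
    have hdq : (0 : ℝ) < 1 - l₀ * q := by nlinarith
    have hinner : 0 ≤ p + q - l₀ * p * q := by nlinarith
    have h := mul_nonneg (mul_nonneg hl₀.le (sub_nonneg.2 hpq)) hinner
    have : l₀ * p ^ 2 / (1 - l₀ * p) ≤ l₀ * q ^ 2 / (1 - l₀ * q) := by
      rw [div_le_div_iff₀ hdp hdq]; nlinarith [h]
    linarith
  -- invariants of the sequence `v`
  have hvfacts : ∀ k, 0 ≤ v k ∧ v k ≤ v (k + 1) ∧ v (k + 1) ≤ vstar := by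
    intro k
    induction k with
    | zero =>
      have hv1 : v 1 = η := by rw [hvrec 0, hv0]; simp
      refine ⟨le_of_eq hv0.symm, ?_, ?_⟩
      · rw [hv0, hv1]; exact hη.le
      · rw [hv1]; exact hηv
    | succ k ih =>
      obtain ⟨h0, h1, h2⟩ := ih
      have h0' : 0 ≤ v (k + 1) := h0.trans h1
      refine ⟨h0', ?_, ?_⟩
      · have h := hψmono _ _ h0 h1 h2
        rwa [← hvrec k, ← hvrec (k + 1)] at h
      · rw [hvrec (k + 1)]
        calc η + l₀ * v (k + 1) ^ 2 / (1 - l₀ * v (k + 1))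
            ≤ η + l₀ * vstar ^ 2 / (1 - l₀ * vstar) := hψmono _ _ h0' h2 le_rfl
          _ = vstar := hfix
  have hv0le : ∀ k, 0 ≤ v k := fun k => (hvfacts k).1
  have hvmono : ∀ k, v k ≤ v (k + 1) := fun k => (hvfacts k).2.1
  have hvle : ∀ k, v k ≤ vstar := by
    intro k
    cases k with
    | zero => rw [hv0]; exact hvpos.le
    | succ n => exact (hvfacts n).2.2
  -- key inequality for the majorizing sequence
  have hkey : ∀ k, l₀ * (v (k + 1) ^ 2 - v k ^ 2) ≤
      (1 - l₀ * v (k + 1)) * (v (k + 2) - v (k + 1)) := by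
    intro k
    have hda : (0 : ℝ) < 1 - l₀ * v k := by nlinarith [hvle k, hv0le k]
    have hdb : (0 : ℝ) < 1 - l₀ * v (k + 1) := by nlinarith [hvle (k + 1), hv0le (k + 1)]
    rw [show k + 2 = (k + 1) + 1 from rfl, hvrec (k + 1)]
    have e1 : l₀ * v (k + 1) ^ 2 / (1 - l₀ * v (k + 1)) * (1 - l₀ * v (k + 1))
        = l₀ * v (k + 1) ^ 2 := div_mul_cancel₀ _ hdb.ne'
    have e2 : l₀ * v k ^ 2 / (1 - l₀ * v k) * (1 - l₀ * v k) = l₀ * v k ^ 2 :=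
      div_mul_cancel₀ _ hda.ne'
    have e3 : l₀ * v k ^ 2 / (1 - l₀ * v k) * (1 - l₀ * v (k + 1)) ≤ l₀ * v k ^ 2 := by
      have hx : 0 ≤ l₀ * v k ^ 2 / (1 - l₀ * v k) := by positivity
      have hle : (1 : ℝ) - l₀ * v (k + 1) ≤ 1 - l₀ * v k := by
        nlinarith [mul_le_mul_of_nonneg_left (hvmono k) hl₀.le]
      calc l₀ * v k ^ 2 / (1 - l₀ * v k) * (1 - l₀ * v (k + 1))
          ≤ l₀ * v k ^ 2 / (1 - l₀ * v k) * (1 - l₀ * v k) :=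
            mul_le_mul_of_nonneg_left hle hx
        _ = l₀ * v k ^ 2 := e2
    have h4 : (1 - l₀ * v (k + 1)) * (v (k + 1) - η)
        = (1 - l₀ * v (k + 1)) * (l₀ * v k ^ 2 / (1 - l₀ * v k)) := by
      rw [hvrec k]; ring
    nlinarith [e1, e3, h4]
  -- ### The identity `B ∘ F'(x₀) = id`
  have hBid : B.comp (F' x₀) = ContinuousLinearMap.id ℝ X := by
    ext z; simpa using hB₂ z
  -- ### Construction of the local inverse
  have main : ∀ u : X, ‖u - x₀‖ ≤ vstar → ∃ A : Y →L[ℝ] X,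
      (∀ y, F' u (A y) = y) ∧ (∀ z, A (F' u z) = z) ∧
      newtonStep F F' B u = u - A (F u) ∧
      ∀ y, ‖A y‖ ≤ (1 - l₀ * ‖u - x₀‖)⁻¹ * ‖B y‖ := by
    intro u hu
    have huR : u ∈ closedBall x₀ R := by
      rw [mem_closedBall_iff_norm]; exact hu.trans hvstarR
    have hTb : ‖B.comp (F' u - F' x₀)‖ ≤ l₀ * ‖u - x₀‖ := hbound u huR
    have hlu : l₀ * ‖u - x₀‖ < 1 / 2 := by
      nlinarith [mul_le_mul_of_nonneg_left hu hl₀.le]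
    set T : X →L[ℝ] X := ContinuousLinearMap.id ℝ X - B.comp (F' u) with hT
    have hTeq : T = -(B.comp (F' u - F' x₀)) := by
      rw [hT, ContinuousLinearMap.comp_sub, hBid, neg_sub]
    have hTnorm : ‖T‖ ≤ l₀ * ‖u - x₀‖ := by rw [hTeq, norm_neg]; exact hTb
    have hT1 : ‖T‖ < 1 := lt_of_le_of_lt hTnorm (by linarith)
    have hone : (1 : X →L[ℝ] X) - T = B.comp (F' u) := by
      rw [hT, ContinuousLinearMap.one_def, sub_sub_cancel]
    set un : (X →L[ℝ] X)ˣ := Units.oneSub T hT1 with hunit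
    have hval : (un : X →L[ℝ] X) = B.comp (F' u) := by
      rw [hunit, Units.val_oneSub, hone]
    refine ⟨(↑un⁻¹ : X →L[ℝ] X).comp B, ?_, ?_, ?_, ?_⟩
    · intro y
      have h1 : B (F' u ((↑un⁻¹ : X →L[ℝ] X) (B y))) = B y := by
        calc B (F' u ((↑un⁻¹ : X →L[ℝ] X) (B y)))
            = ((un : X →L[ℝ] X) * (↑un⁻¹ : X →L[ℝ] X)) (B y) := by
              rw [ContinuousLinearMap.mul_apply, hval, ContinuousLinearMap.comp_apply]
          _ = B y := by rw [un.mul_inv, ContinuousLinearMap.one_apply]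
      have h2 := congrArg (fun w => F' x₀ w) h1
      simp only [hB₁] at h2
      simpa [ContinuousLinearMap.comp_apply] using h2
    · intro z
      have h1 : ((↑un⁻¹ : X →L[ℝ] X) * (un : X →L[ℝ] X)) z = z := by
        rw [un.inv_mul, ContinuousLinearMap.one_apply]
      simpa [ContinuousLinearMap.mul_apply, ContinuousLinearMap.comp_apply, hval] using h1
    · unfold newtonStep
      have hinv : Ring.inverse (B.comp (F' u)) = (↑un⁻¹ : X →L[ℝ] X) := by
        rw [← hone, NormedRing.inverse_one_sub T hT1]
      rw [hinv]; rfl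
    · intro y
      have hinvnorm : ‖(↑un⁻¹ : X →L[ℝ] X)‖ ≤ (1 - l₀ * ‖u - x₀‖)⁻¹ := by
        have hsum : Summable fun n : ℕ => ‖T‖ ^ n :=
          summable_geometric_of_lt_one (norm_nonneg _) hT1
        have hb : ∀ n : ℕ, ‖T ^ n‖ ≤ ‖T‖ ^ n := by
          intro n
          cases n with
          | zero => simpa [ContinuousLinearMap.one_def] using ContinuousLinearMap.norm_id_le
          | succ n => exact norm_pow_le' T n.succ_pos
        have hsumT : Summable fun n : ℕ => ‖T ^ n‖ :=
          hsum.of_nonneg_of_le (fun n => norm_nonneg _) hb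
        have h1 : ‖(↑un⁻¹ : X →L[ℝ] X)‖ ≤ (1 - ‖T‖)⁻¹ := by
          have hcoe : (↑un⁻¹ : X →L[ℝ] X) = ∑' n : ℕ, T ^ n := rfl
          calc ‖(↑un⁻¹ : X →L[ℝ] X)‖ = ‖∑' n : ℕ, T ^ n‖ := by rw [hcoe]
            _ ≤ ∑' n : ℕ, ‖T ^ n‖ := norm_tsum_le_tsum_norm hsumT
            _ ≤ ∑' n : ℕ, ‖T‖ ^ n := Summable.tsum_le_tsum hb hsumT hsum
            _ = (1 - ‖T‖)⁻¹ := tsum_geometric_of_lt_one (norm_nonneg _) hT1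
        have h2 : (1 - ‖T‖)⁻¹ ≤ (1 - l₀ * ‖u - x₀‖)⁻¹ := by
          apply inv_anti₀ (by linarith) (by linarith)
        linarith
      calc ‖((↑un⁻¹ : X →L[ℝ] X).comp B) y‖ = ‖(↑un⁻¹ : X →L[ℝ] X) (B y)‖ := rfl
        _ ≤ ‖(↑un⁻¹ : X →L[ℝ] X)‖ * ‖B y‖ := ContinuousLinearMap.le_opNorm _ _
        _ ≤ (1 - l₀ * ‖u - x₀‖)⁻¹ * ‖B y‖ :=
            mul_le_mul_of_nonneg_right hinvnorm (norm_nonneg _)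
  -- ### The Newton sequence
  set x : ℕ → X := fun k => (newtonStep F F' B)^[k] x₀ with hxdef
  have hx0 : x 0 = x₀ := rfl
  have hxs : ∀ k, x (k + 1) = newtonStep F F' B (x k) := fun k =>
    Function.iterate_succ_apply' _ _ _
  -- main induction
  have hinv : ∀ k, ‖x k - x₀‖ ≤ v k ∧ ‖x (k + 1) - x k‖ ≤ v (k + 1) - v k := by
    intro k
    induction k with
    | zero =>
      constructor
      · rw [hx0, hv0]; simp
      · obtain ⟨A, hA1, hA2, hstep, hAnorm⟩ := main x₀ (by simpa using hvpos.le)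
        rw [hxs 0, hx0, hstep]
        have he : x₀ - A (F x₀) - x₀ = -(A (F x₀)) := by abel
        rw [he, norm_neg]
        have h1 := hAnorm (F x₀)
        have hv1 : v 1 = η := by rw [hvrec 0, hv0]; simp
        rw [hv1, hv0]
        simp only [sub_self, norm_zero, mul_zero, sub_zero, inv_one, one_mul] at h1
        linarith
    | succ k ih =>
      obtain ⟨ih1, ih2⟩ := ih
      have hk1 : v (k + 1) ≤ vstar := hvle (k + 1)
      have hb1 : ‖x (k + 1) - x₀‖ ≤ v (k + 1) := by
        calc ‖x (k + 1) - x₀‖ = ‖(x (k + 1) - x k) + (x k - x₀)‖ := by abel_nf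
          _ ≤ ‖x (k + 1) - x k‖ + ‖x k - x₀‖ := norm_add_le _ _
          _ ≤ (v (k + 1) - v k) + v k := add_le_add ih2 ih1
          _ = v (k + 1) := by ring
      refine ⟨hb1, ?_⟩
      obtain ⟨Aa, hAa1, hAa2, hstepa, hAanorm⟩ := main (x k) (ih1.trans (hvle k))
      obtain ⟨Ab, hAb1, hAb2, hstepb, hAbnorm⟩ := main (x (k + 1)) (hb1.trans hk1)
      have hxk1 : x (k + 1) = x k - Aa (F (x k)) := by rw [hxs k, hstepa]
      have hFa : B (F (x k)) + B ((F' (x k)) (x (k + 1) - x k)) = 0 := by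
        rw [hxk1]
        have h : x k - Aa (F (x k)) - x k = -(Aa (F (x k))) := by abel
        rw [h, map_neg, hAa1, map_neg, add_neg_cancel]
      set g : X → X := fun w => B (F w) - (B.comp (F' (x k))) w with hg
      set sset := segment ℝ (x k) (x (k + 1)) with hss
      have hsub : ∀ w ∈ sset, ‖w - x₀‖ ≤ v (k + 1) := by
        rintro w ⟨p, q, hp, hq, hpq, rfl⟩
        have hrw : p • x k + q • x (k + 1) - x₀ = p • (x k - x₀) + q • (x (k + 1) - x₀) := by
          have h0 : x₀ = (p + q) • x₀ := by rw [hpq, one_smul]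
          calc p • x k + q • x (k + 1) - x₀ = p • x k + q • x (k + 1) - (p + q) • x₀ := by
                rw [← h0]
            _ = p • (x k - x₀) + q • (x (k + 1) - x₀) := by
                rw [add_smul, smul_sub, smul_sub]; abel
        rw [hrw]
        calc ‖p • (x k - x₀) + q • (x (k + 1) - x₀)‖
            ≤ ‖p • (x k - x₀)‖ + ‖q • (x (k + 1) - x₀)‖ := norm_add_le _ _
          _ = p * ‖x k - x₀‖ + q * ‖x (k + 1) - x₀‖ := by
              rw [norm_smul, norm_smul, Real.norm_of_nonneg hp, Real.norm_of_nonneg hq]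
          _ ≤ p * v (k + 1) + q * v (k + 1) :=
              add_le_add (mul_le_mul_of_nonneg_left (ih1.trans (hvmono k)) hp)
                (mul_le_mul_of_nonneg_left hb1 hq)
          _ = v (k + 1) := by rw [← add_mul, hpq, one_mul]
      have hsR : ∀ w ∈ sset, w ∈ closedBall x₀ R := by
        intro w hw
        rw [mem_closedBall_iff_norm]
        exact (hsub w hw).trans (hk1.trans hvstarR)
      have hsDF : ∀ w ∈ sset, w ∈ DF := fun w hw => hball (hsR w hw)
      have hgderiv : ∀ w ∈ sset,
          HasFDerivWithinAt g (B.comp (F' w) - B.comp (F' (x k))) sset w := by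
        intro w hw
        have h1 : HasFDerivAt (fun z => B (F z)) (B.comp (F' w)) w :=
          B.hasFDerivAt.comp w (hFderiv w (hsDF w hw))
        have h2 : HasFDerivAt (fun z => (B.comp (F' (x k))) z) (B.comp (F' (x k))) w :=
          (B.comp (F' (x k))).hasFDerivAt
        exact (h1.sub h2).hasFDerivWithinAt
      have hgbound : ∀ w ∈ sset,
          ‖B.comp (F' w) - B.comp (F' (x k))‖ ≤ l₀ * (v (k + 1) + v k) := by
        intro w hw
        have e : B.comp (F' w) - B.comp (F' (x k))
            = B.comp (F' w - F' x₀) - B.comp (F' (x k) - F' x₀) := by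
          rw [ContinuousLinearMap.comp_sub, ContinuousLinearMap.comp_sub]; abel
        rw [e]
        have hkR : x k ∈ closedBall x₀ R := by
          rw [mem_closedBall_iff_norm]; exact ih1.trans ((hvle k).trans hvstarR)
        have hw1 := (hbound w (hsR w hw)).trans
          (mul_le_mul_of_nonneg_left (hsub w hw) hl₀.le)
        have hw2 := (hbound (x k) hkR).trans (mul_le_mul_of_nonneg_left ih1 hl₀.le)
        calc ‖B.comp (F' w - F' x₀) - B.comp (F' (x k) - F' x₀)‖
            ≤ ‖B.comp (F' w - F' x₀)‖ + ‖B.comp (F' (x k) - F' x₀)‖ := norm_sub_le _ _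
          _ ≤ l₀ * (v (k + 1) + v k) := by nlinarith [hw1, hw2]
      have hMVT : ‖g (x (k + 1)) - g (x k)‖ ≤ l₀ * (v (k + 1) + v k) * ‖x (k + 1) - x k‖ :=
        (convex_segment _ _).norm_image_sub_le_of_norm_hasFDerivWithin_le hgderiv hgbound
          (left_mem_segment ℝ _ _) (right_mem_segment ℝ _ _)
      have hgval : g (x (k + 1)) - g (x k) = B (F (x (k + 1))) := by
        simp only [hg]
        have he : (B.comp (F' (x k))) (x (k + 1)) - (B.comp (F' (x k))) (x k)
            = B ((F' (x k)) (x (k + 1) - x k)) := by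
          rw [ContinuousLinearMap.comp_apply, ContinuousLinearMap.comp_apply,
            ← map_sub, ← map_sub]
        calc B (F (x (k + 1))) - (B.comp (F' (x k))) (x (k + 1))
              - (B (F (x k)) - (B.comp (F' (x k))) (x k))
            = B (F (x (k + 1))) - (B (F (x k))
              + ((B.comp (F' (x k))) (x (k + 1)) - (B.comp (F' (x k))) (x k))) := by abel
          _ = B (F (x (k + 1))) - (B (F (x k)) + B ((F' (x k)) (x (k + 1) - x k))) := by
              rw [he]
          _ = B (F (x (k + 1))) := by rw [hFa, sub_zero]
      have hBFb : ‖B (F (x (k + 1)))‖ ≤ l₀ * (v (k + 1) ^ 2 - v k ^ 2) := by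
        rw [← hgval]
        have hC : 0 ≤ l₀ * (v (k + 1) + v k) :=
          mul_nonneg hl₀.le (add_nonneg (hv0le (k + 1)) (hv0le k))
        calc ‖g (x (k + 1)) - g (x k)‖
            ≤ l₀ * (v (k + 1) + v k) * ‖x (k + 1) - x k‖ := hMVT
          _ ≤ l₀ * (v (k + 1) + v k) * (v (k + 1) - v k) := mul_le_mul_of_nonneg_left ih2 hC
          _ = l₀ * (v (k + 1) ^ 2 - v k ^ 2) := by ring
      have hx2 : x (k + 1 + 1) - x (k + 1) = -(Ab (F (x (k + 1)))) := by
        rw [hxs (k + 1), hstepb]; abel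
      rw [hx2, norm_neg]
      have hden : (0 : ℝ) < 1 - l₀ * v (k + 1) := by
        nlinarith [hvle (k + 1), hv0le (k + 1)]
      have hmono1 : (1 - l₀ * ‖x (k + 1) - x₀‖)⁻¹ ≤ (1 - l₀ * v (k + 1))⁻¹ := by
        apply inv_anti₀ hden
        nlinarith [mul_le_mul_of_nonneg_left hb1 hl₀.le]
      have h2 : (1 - l₀ * v (k + 1))⁻¹ * (l₀ * (v (k + 1) ^ 2 - v k ^ 2))
          ≤ (1 - l₀ * v (k + 1))⁻¹ * ((1 - l₀ * v (k + 1)) * (v (k + 2) - v (k + 1))) :=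
        mul_le_mul_of_nonneg_left (hkey k) (by positivity)
      have hBF0 : 0 ≤ l₀ * (v (k + 1) ^ 2 - v k ^ 2) :=
        le_trans (norm_nonneg _) hBFb
      calc ‖Ab (F (x (k + 1)))‖
          ≤ (1 - l₀ * ‖x (k + 1) - x₀‖)⁻¹ * ‖B (F (x (k + 1)))‖ := hAbnorm _
        _ ≤ (1 - l₀ * v (k + 1))⁻¹ * (l₀ * (v (k + 1) ^ 2 - v k ^ 2)) :=
            mul_le_mul hmono1 hBFb (norm_nonneg _) (by positivity)
        _ ≤ (1 - l₀ * v (k + 1))⁻¹ * ((1 - l₀ * v (k + 1)) * (v (k + 2) - v (k + 1))) := h2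
        _ = v (k + 1 + 1) - v (k + 1) := inv_mul_cancel_left₀ hden.ne' _
  have hxball : ∀ k, x k ∈ closedBall x₀ vstar := fun k => by
    rw [mem_closedBall_iff_norm]; exact (hinv k).1.trans (hvle k)
  -- telescoping
  have hdist : ∀ k m, k ≤ m → ‖x m - x k‖ ≤ v m - v k := by
    intro k m hkm
    induction m, hkm using Nat.le_induction with
    | base => simp
    | succ m hm ih =>
      calc ‖x (m + 1) - x k‖ = ‖(x (m + 1) - x m) + (x m - x k)‖ := by abel_nf
        _ ≤ ‖x (m + 1) - x m‖ + ‖x m - x k‖ := norm_add_le _ _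
        _ ≤ (v (m + 1) - v m) + (v m - v k) := add_le_add (hinv m).2 ih
        _ = v (m + 1) - v k := by ring
  -- convergence of `v`
  have hmonov : Monotone v := monotone_nat_of_le_succ hvmono
  have hbdd : BddAbove (Set.range v) := ⟨vstar, by rintro _ ⟨k, rfl⟩; exact hvle k⟩
  set L : ℝ := ⨆ k, v k with hLdef
  have hL : Tendsto v atTop (nhds L) := tendsto_atTop_ciSup hmonov hbdd
  have hLle : L ≤ vstar := ciSup_le hvle
  have hvL : ∀ k, v k ≤ L := fun k => Monotone.ge_of_tendsto hmonov hL k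
  -- Cauchy
  have hcauchy : CauchySeq x := by
    apply cauchySeq_of_le_tendsto_0 (fun N => L - v N)
    · intro n m N hn hm
      rcases le_total n m with h | h
      · calc dist (x n) (x m) = ‖x m - x n‖ := by rw [dist_eq_norm, norm_sub_rev]
          _ ≤ v m - v n := hdist n m h
          _ ≤ L - v N := by
              have h1 := hvL m
              have h2 := hmonov hn
              linarith
      · calc dist (x n) (x m) = ‖x n - x m‖ := by rw [dist_eq_norm]
          _ ≤ v n - v m := hdist m n h
          _ ≤ L - v N := by
              have h1 := hvL n
              have h2 := hmonov hm
              linarith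
    · have h : Tendsto (fun N => L - v N) atTop (nhds (L - L)) :=
        tendsto_const_nhds.sub hL
      simpa using h
  obtain ⟨xstar, hxstar⟩ := cauchySeq_tendsto_of_complete hcauchy
  -- limit is in the ball and in DF
  have hxsball : xstar ∈ closedBall x₀ vstar :=
    isClosed_closedBall.mem_of_tendsto hxstar (Eventually.of_forall hxball)
  have hxsDF : xstar ∈ DF := hball (closedBall_subset_closedBall hvstarR hxsball)
  -- F xstar = 0
  have htend1 : Tendsto (fun k => B (F (x k))) atTop (nhds (B (F xstar))) := by
    have hFc : ContinuousAt (fun w => B (F w)) xstar :=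
      B.continuous.continuousAt.comp (hFderiv xstar hxsDF).continuousAt
    exact hFc.tendsto.comp hxstar
  have htend0 : Tendsto (fun k => B (F (x k))) atTop (nhds 0) := by
    apply squeeze_zero_norm (a := fun k => 2 * (v (k + 1) - v k))
    · intro k
      obtain ⟨A, hA1, hA2, hstep, hAn⟩ := main (x k) ((hinv k).1.trans (hvle k))
      have heq : B (F (x k)) = (B.comp (F' (x k))) (A (F (x k))) := by
        rw [ContinuousLinearMap.comp_apply, hA1]
      have hkR : x k ∈ closedBall x₀ R := by
        rw [mem_closedBall_iff_norm]; exact (hinv k).1.trans ((hvle k).trans hvstarR)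
      have hnormE : ‖B.comp (F' (x k))‖ ≤ 2 := by
        have e : B.comp (F' (x k))
            = ContinuousLinearMap.id ℝ X + B.comp (F' (x k) - F' x₀) := by
          rw [ContinuousLinearMap.comp_sub, hBid]; abel
        rw [e]
        have h1 := (hbound (x k) hkR).trans
          (mul_le_mul_of_nonneg_left ((hinv k).1.trans (hvle k)) hl₀.le)
        calc ‖ContinuousLinearMap.id ℝ X + B.comp (F' (x k) - F' x₀)‖
            ≤ ‖ContinuousLinearMap.id ℝ X‖ + ‖B.comp (F' (x k) - F' x₀)‖ := norm_add_le _ _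
          _ ≤ 1 + l₀ * vstar := add_le_add ContinuousLinearMap.norm_id_le
              ((hbound (x k) hkR).trans (by nlinarith [(hinv k).1, hvle k]))
          _ ≤ 2 := by linarith
      have hAF : ‖A (F (x k))‖ = ‖x (k + 1) - x k‖ := by
        rw [hxs k, hstep]
        have h : x k - A (F (x k)) - x k = -(A (F (x k))) := by abel
        rw [h, norm_neg]
      calc ‖B (F (x k))‖ = ‖(B.comp (F' (x k))) (A (F (x k)))‖ := by rw [heq]
        _ ≤ ‖B.comp (F' (x k))‖ * ‖A (F (x k))‖ := ContinuousLinearMap.le_opNorm _ _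
        _ ≤ 2 * (v (k + 1) - v k) := by
            rw [hAF]
            exact mul_le_mul hnormE (hinv k).2 (norm_nonneg _) (by norm_num)
    · have h1 : Tendsto (fun k => v (k + 1)) atTop (nhds L) :=
        hL.comp (tendsto_add_atTop_nat 1)
      have h2 := (h1.sub hL).const_mul (2 : ℝ)
      simpa using h2
  have hBF0 : B (F xstar) = 0 := tendsto_nhds_unique htend1 htend0
  have hF0 : F xstar = 0 := by
    have h := hB₁ (F xstar)
    rw [hBF0, map_zero] at h
    exact h.symm
  -- error bound
  have herr : ∀ k, ‖xstar - x k‖ ≤ vstar - v k := by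
    intro k
    have h1 : Tendsto (fun m => ‖x m - x k‖) atTop (nhds ‖xstar - x k‖) :=
      (hxstar.sub_const (x k)).norm
    apply le_of_tendsto h1
    filter_upwards [eventually_ge_atTop k] with m hm
    exact (hdist k m hm).trans (by linarith [hvle m])
  -- assemble
  refine ⟨x, hx0, ?_, hxball, xstar, hxstar, hF0, herr⟩
  intro k
  obtain ⟨A, hA1, hA2, hstep, _⟩ := main (x k) ((hinv k).1.trans (hvle k))
  exact ⟨A, hA1, hA2, by rw [hxs k, hstep]⟩
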